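/- arXiv:2301.09500 — 3 statements merged into one kernel-verified Lean document; each statement's English description precedes it below -/
import Mathlib

section
/- Let W be a d × d real symmetric matrix with spectral decomposition W = Σ_{j=1}^d w_j u_j u_jᵀ, where u_1, …, u_d are orthonormal eigenvectors and w_1, …, w_d the corresponding eigenvalues, and let K be an integer with 1 ≤ K ≤ d. Define γ* = inf{γ ≥ 0 : Σ_{j=1}^d min{1, max(w_j − γ, 0)} ≤ K} and H* = Σ_{j=1}^d min{1, max(w_j − γ*, 0)} u_j u_jᵀ. Then H* is positive semi-definite, all eigenvalues of H* lie in [0, 1] (so ‖H*‖₂ ≤ 1), tr(H*) ≤ K (so ‖H*‖_* ≤ K), and for every d × d real positive semi-definite matrix H satisfying H ⪯ I_d and tr(H) ≤ K one has ‖H* − W‖_F ≤ ‖H − W‖_F; that is, H* minimizes ‖H − W‖_F² over the set {H positive semi-definite : ‖H‖_* ≤ K, ‖H‖₂ ≤ 1}. -/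
open Matrix BigOperators

/-- Squared Frobenius norm of a real matrix. -/
noncomputable def frobNorm {d : ℕ} (M : Matrix (Fin d) (Fin d) ℝ) : ℝ :=
  Real.sqrt (∑ a, ∑ b, (M a b) ^ 2)

/-!
Conjugating by the orthogonal matrix of eigenvectors diagonalizes `W` and `H*`, preserves the
constraint set and the Frobenius norm, and the diagonal of a feasible `H` is a vector in the
capped simplex `{λ ∈ [0,1]ᵈ : ∑ λ ≤ K}`. Since the off-diagonal entries only add to the distance
to a diagonal matrix, the problem reduces to projecting `w` onto the capped simplex. That
projection is `clampUnit (w - γ*)`: coordinatewise it is the projection of `w - γ*` onto `[0,1]`,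
and complementary slackness (`γ* > 0` forces `∑ clampUnit (w - γ*) = K`, by continuity and the
minimality of `γ*`) makes the multiplier term `γ* (∑ λ - K)` harmless.
-/

noncomputable def clampUnit (t : ℝ) : ℝ := min 1 (max t 0)

lemma clampUnit_nonneg (t : ℝ) : 0 ≤ clampUnit t := le_min zero_le_one (le_max_right _ _)

lemma clampUnit_le_one (t : ℝ) : clampUnit t ≤ 1 := min_le_left _ _

lemma clampUnit_of_nonpos {t : ℝ} (ht : t ≤ 0) : clampUnit t = 0 := by
  simp [clampUnit, max_eq_right ht]

lemma continuous_clampUnit : Continuous clampUnit :=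
  continuous_const.min (continuous_id.max continuous_const)

/-- The variational inequality of the projection onto `[0, 1]`. -/
lemma sub_clampUnit_mul_sub_clampUnit_nonpos (t : ℝ) {l : ℝ} (hl0 : 0 ≤ l) (hl1 : l ≤ 1) :
    (t - clampUnit t) * (l - clampUnit t) ≤ 0 := by
  unfold clampUnit
  rcases le_total t 0 with ht | ht
  · rw [max_eq_right ht, min_eq_right zero_le_one]
    nlinarith
  rcases le_total 1 t with ht1 | ht1
  · rw [max_eq_left ht, min_eq_left ht1]
    nlinarith
  · rw [max_eq_left ht, min_eq_right ht1]
    simp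

section Sublevel

open Filter Topology

variable {f : ℝ → ℝ} {c : ℝ}

lemma sInf_nonneg_sublevel_mem (hf : Continuous f) (hne : {γ | 0 ≤ γ ∧ f γ ≤ c}.Nonempty) :
    sInf {γ | 0 ≤ γ ∧ f γ ≤ c} ∈ {γ | 0 ≤ γ ∧ f γ ≤ c} :=
  ((isClosed_le continuous_const continuous_id).inter (isClosed_le hf continuous_const)).csInf_mem
    hne ⟨0, fun _ hγ => hγ.1⟩

lemma eq_of_sInf_nonneg_sublevel_pos (hf : Continuous f)
    (hne : {γ | 0 ≤ γ ∧ f γ ≤ c}.Nonempty) (hpos : 0 < sInf {γ | 0 ≤ γ ∧ f γ ≤ c}) :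
    f (sInf {γ | 0 ≤ γ ∧ f γ ≤ c}) = c := by
  set γ₀ := sInf {γ | 0 ≤ γ ∧ f γ ≤ c}
  refine le_antisymm (sInf_nonneg_sublevel_mem hf hne).2 (not_lt.mp fun hlt => ?_)
  have hnear : ∀ᶠ γ in 𝓝[<] γ₀, f γ < c ∧ γ ∈ Set.Ioo 0 γ₀ :=
    ((hf.continuousAt.eventually_lt continuousAt_const hlt).filter_mono nhdsWithin_le_nhds).and
      (Ioo_mem_nhdsLT hpos)
  obtain ⟨γ, hfγ, hγ0, hγlt⟩ := hnear.exists
  have hbdd : BddBelow {γ | 0 ≤ γ ∧ f γ ≤ c} := ⟨0, fun _ h => h.1⟩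
  exact hγlt.not_ge (csInf_le hbdd ⟨hγ0.le, hfγ.le⟩)

end Sublevel

section CappedSimplex

variable {ι : Type*} [Fintype ι]

noncomputable def waterLevel (w : ι → ℝ) (K : ℝ) : ℝ :=
  sInf {γ | 0 ≤ γ ∧ ∑ j, clampUnit (w j - γ) ≤ K}

variable (w : ι → ℝ) {K : ℝ}

lemma continuous_sum_clampUnit_sub : Continuous fun γ => ∑ j, clampUnit (w j - γ) :=
  continuous_finsetSum _ fun _ _ => continuous_clampUnit.comp (continuous_const.sub continuous_id)

lemma nonneg_sublevel_sum_clampUnit_nonempty (hK : 0 ≤ K) :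
    {γ : ℝ | 0 ≤ γ ∧ ∑ j, clampUnit (w j - γ) ≤ K}.Nonempty := by
  refine ⟨∑ i, |w i|, Finset.sum_nonneg fun i _ => abs_nonneg _, ?_⟩
  have hw : ∀ j, w j ≤ ∑ i, |w i| := fun j =>
    (le_abs_self _).trans (Finset.single_le_sum (fun i _ => abs_nonneg (w i)) (Finset.mem_univ j))
  simpa [clampUnit_of_nonpos (sub_nonpos.mpr (hw _))] using hK

lemma waterLevel_nonneg_and_sum_le (hK : 0 ≤ K) :
    0 ≤ waterLevel w K ∧ ∑ j, clampUnit (w j - waterLevel w K) ≤ K :=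
  sInf_nonneg_sublevel_mem (continuous_sum_clampUnit_sub w)
    (nonneg_sublevel_sum_clampUnit_nonempty w hK)

lemma sum_clampUnit_sub_waterLevel (hK : 0 ≤ K) (hpos : 0 < waterLevel w K) :
    ∑ j, clampUnit (w j - waterLevel w K) = K :=
  eq_of_sInf_nonneg_sublevel_pos (continuous_sum_clampUnit_sub w)
    (nonneg_sublevel_sum_clampUnit_nonempty w hK) hpos

/-- `γ` is the Lagrange multiplier of the constraint `∑ λ ≤ K`, and `hslack` is complementary
slackness. -/
lemma sum_sq_clampUnit_sub_le {γ : ℝ} (l : ι → ℝ) (hγ : 0 ≤ γ)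
    (hslack : 0 < γ → ∑ j, clampUnit (w j - γ) = K)
    (hl0 : ∀ j, 0 ≤ l j) (hl1 : ∀ j, l j ≤ 1) (hlK : ∑ j, l j ≤ K) :
    ∑ j, (clampUnit (w j - γ) - w j) ^ 2 ≤ ∑ j, (l j - w j) ^ 2 := by
  set c : ι → ℝ := fun j => clampUnit (w j - γ)
  have hmult : 0 ≤ γ * (∑ j, c j - ∑ j, l j) := by
    rcases hγ.eq_or_lt with rfl | hγpos
    · simp
    · exact mul_nonneg hγ (by rw [hslack hγpos]; linarith)
  have hcross : 0 ≤ ∑ j, (c j - w j) * (l j - c j) := by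
    have hpoint : ∀ j, γ * (c j - l j) ≤ (c j - w j) * (l j - c j) := fun j => by
      nlinarith [sub_clampUnit_mul_sub_clampUnit_nonpos (w j - γ) (hl0 j) (hl1 j)]
    calc 0 ≤ γ * (∑ j, c j - ∑ j, l j) := hmult
      _ = ∑ j, γ * (c j - l j) := by rw [← Finset.sum_sub_distrib, Finset.mul_sum]
      _ ≤ _ := Finset.sum_le_sum fun j _ => hpoint j
  have hexpand : ∑ j, (l j - w j) ^ 2
      = ∑ j, (c j - w j) ^ 2 + ∑ j, (l j - c j) ^ 2 + 2 * ∑ j, (c j - w j) * (l j - c j) := by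
    rw [Finset.mul_sum, ← Finset.sum_add_distrib, ← Finset.sum_add_distrib]
    exact Finset.sum_congr rfl fun j _ => by ring
  have hsq : 0 ≤ ∑ j, (l j - c j) ^ 2 := Finset.sum_nonneg fun j _ => sq_nonneg _
  linarith

end CappedSimplex

section Spectral

variable {m n R : Type*}

lemma sum_smul_vecMulVec_eq_transpose_mul_diagonal_mul [Fintype m] [DecidableEq m]
    [CommSemiring R] (c : m → R) (u : m → n → R) :
    ∑ j, c j • vecMulVec (u j) (u j) = (of u)ᵀ * diagonal c * of u := by
  ext a b
  simp only [Matrix.sum_apply, Matrix.smul_apply, vecMulVec_apply, smul_eq_mul, mul_apply,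
    diagonal_apply, transpose_apply, of_apply, mul_ite, mul_zero, Finset.sum_ite_eq',
    Finset.mem_univ, if_true]
  exact Finset.sum_congr rfl fun k _ => by ring

lemma of_mul_transpose_eq_one [Fintype n] [DecidableEq m] [CommSemiring R] {u : m → n → R}
    (horth : ∀ i j, u i ⬝ᵥ u j = if i = j then 1 else 0) : of u * (of u)ᵀ = 1 := by
  ext i j
  rw [mul_apply', one_apply]
  exact horth i j

lemma sum_sq_entries_eq_trace [Fintype m] [Fintype n] [CommSemiring R] (M : Matrix m n R) :
    ∑ a, ∑ b, M a b ^ 2 = (Mᵀ * M).trace := by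
  simp only [trace, Matrix.diag, mul_apply, transpose_apply, sq]
  exact Finset.sum_comm

section Orthogonal

variable [Fintype n] [DecidableEq n] {U : Matrix n n R}

lemma exists_eq_transpose_mul_mul [CommSemiring R] (hU : U * Uᵀ = 1) (M : Matrix n n R) :
    ∃ N, M = Uᵀ * N * U := by
  refine ⟨U * M * Uᵀ, ?_⟩
  rw [← Matrix.mul_assoc, ← Matrix.mul_assoc, mul_eq_one_comm.mp hU, Matrix.one_mul,
    Matrix.mul_assoc, mul_eq_one_comm.mp hU, Matrix.mul_one]

lemma one_sub_transpose_mul_mul [CommRing R] (hU : U * Uᵀ = 1) (M : Matrix n n R) :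
    1 - Uᵀ * M * U = Uᵀ * (1 - M) * U := by
  rw [mul_sub, sub_mul, mul_one, mul_eq_one_comm.mp hU]

lemma trace_transpose_mul_mul [CommSemiring R] (hU : U * Uᵀ = 1) (M : Matrix n n R) :
    (Uᵀ * M * U).trace = M.trace := by
  rw [trace_mul_cycle, hU, one_mul]

lemma posSemidef_transpose_mul_mul_iff {U : Matrix n n ℝ} (hU : U * Uᵀ = 1)
    {A : Matrix n n ℝ} : (Uᵀ * A * U).PosSemidef ↔ A.PosSemidef :=
  -- over `ℝ`, `star U` unfolds to `Uᵀ`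
  IsUnit.posSemidef_star_left_conjugate_iff ⟨⟨U, Uᵀ, hU, mul_eq_one_comm.mp hU⟩, rfl⟩

end Orthogonal

lemma Matrix.PosSemidef.diag_le_one_of_one_sub [DecidableEq n] {A : Matrix n n ℝ}
    (h : (1 - A).PosSemidef) (i : n) : A i i ≤ 1 := by
  simpa [one_apply] using h.diag_nonneg (i := i)

end Spectral

section Frobenius

variable {d : ℕ}

lemma frobNorm_transpose_mul_mul {U : Matrix (Fin d) (Fin d) ℝ} (hU : U * Uᵀ = 1)
    (M : Matrix (Fin d) (Fin d) ℝ) : frobNorm (Uᵀ * M * U) = frobNorm M := by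
  unfold frobNorm
  rw [sum_sq_entries_eq_trace, sum_sq_entries_eq_trace]
  congr 1
  calc ((Uᵀ * M * U)ᵀ * (Uᵀ * M * U)).trace = (Uᵀ * (Mᵀ * M) * U).trace := by
        simp only [transpose_mul, transpose_transpose, Matrix.mul_assoc]
        rw [← Matrix.mul_assoc U, hU, Matrix.one_mul]
    _ = (Mᵀ * M).trace := trace_transpose_mul_mul hU _

lemma frobNorm_transpose_mul_mul_sub {U : Matrix (Fin d) (Fin d) ℝ} (hU : U * Uᵀ = 1)
    (A B : Matrix (Fin d) (Fin d) ℝ) : frobNorm (Uᵀ * A * U - Uᵀ * B * U) = frobNorm (A - B) := by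
  rw [← sub_mul, ← mul_sub, frobNorm_transpose_mul_mul hU]

lemma frobNorm_diagonal (c : Fin d → ℝ) : frobNorm (diagonal c) = √(∑ a, c a ^ 2) := by
  simp [frobNorm, diagonal_apply, ite_pow]

lemma sqrt_sum_sq_diag_sub_le_frobNorm (M : Matrix (Fin d) (Fin d) ℝ) (c : Fin d → ℝ) :
    √(∑ a, (M a a - c a) ^ 2) ≤ frobNorm (M - diagonal c) := by
  refine Real.sqrt_le_sqrt (Finset.sum_le_sum fun a _ => ?_)
  simpa using Finset.single_le_sum (f := fun b => ((M - diagonal c) a b) ^ 2)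
    (fun b _ => sq_nonneg _) (Finset.mem_univ a)

end Frobenius

theorem fantope_projection_general (d K : ℕ)
    (W : Matrix (Fin d) (Fin d) ℝ) (w : Fin d → ℝ) (u : Fin d → Fin d → ℝ)
    (horth : ∀ i j, dotProduct (u i) (u j) = if i = j then (1 : ℝ) else 0)
    (hW : W = ∑ j, w j • Matrix.vecMulVec (u j) (u j))
    (γstar : ℝ)
    (hγ : γstar = sInf {γ : ℝ | 0 ≤ γ ∧ ∑ j, min 1 (max (w j - γ) 0) ≤ (K : ℝ)})
    (Hstar : Matrix (Fin d) (Fin d) ℝ)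
    (hH : Hstar = ∑ j, (min 1 (max (w j - γstar) 0)) • Matrix.vecMulVec (u j) (u j)) :
    Hstar.PosSemidef ∧ (1 - Hstar).PosSemidef ∧ Hstar.trace ≤ (K : ℝ) ∧
      ∀ H : Matrix (Fin d) (Fin d) ℝ, H.PosSemidef → (1 - H).PosSemidef →
        H.trace ≤ (K : ℝ) → frobNorm (Hstar - W) ≤ frobNorm (H - W) := by
  obtain rfl : γstar = waterLevel w K := hγ
  set c : Fin d → ℝ := fun j => clampUnit (w j - waterLevel w K)
  obtain ⟨hγ0, hcK⟩ := waterLevel_nonneg_and_sum_le w (Nat.cast_nonneg K)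
  set U := of u
  have hU : U * Uᵀ = 1 := of_mul_transpose_eq_one horth
  change Hstar = ∑ j, c j • vecMulVec (u j) (u j) at hH
  rw [sum_smul_vecMulVec_eq_transpose_mul_diagonal_mul] at hW hH
  subst hW hH
  refine ⟨(posSemidef_transpose_mul_mul_iff hU).mpr
      (posSemidef_diagonal_iff.mpr fun j => clampUnit_nonneg _), ?_,
    by rwa [trace_transpose_mul_mul hU, trace_diagonal], fun H hH0 hH1 hHK => ?_⟩
  · rw [one_sub_transpose_mul_mul hU, posSemidef_transpose_mul_mul_iff hU, ← diagonal_one,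
      diagonal_sub]
    exact posSemidef_diagonal_iff.mpr fun j => sub_nonneg.mpr (clampUnit_le_one _)
  obtain ⟨G, rfl⟩ := exists_eq_transpose_mul_mul hU H
  rw [posSemidef_transpose_mul_mul_iff hU] at hH0
  rw [one_sub_transpose_mul_mul hU, posSemidef_transpose_mul_mul_iff hU] at hH1
  rw [trace_transpose_mul_mul hU] at hHK
  rw [frobNorm_transpose_mul_mul_sub hU, frobNorm_transpose_mul_mul_sub hU, diagonal_sub,
    frobNorm_diagonal]
  refine (Real.sqrt_le_sqrt ?_).trans (sqrt_sum_sq_diag_sub_le_frobNorm G w)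
  exact sum_sq_clampUnit_sub_le w (fun a => G a a) hγ0
    (sum_clampUnit_sub_waterLevel w (Nat.cast_nonneg K)) (fun a => hH0.diag_nonneg)
    hH1.diag_le_one_of_one_sub hHK

/-- Proposition 1: the Fantope projection.  Given a symmetric matrix `W` with spectral
decomposition `W = ∑ j w_j u_j u_jᵀ`, the matrix `H* = ∑ j min(1, max(w_j − γ*, 0)) u_j u_jᵀ`,
where `γ* = inf{γ ≥ 0 : ∑ j min(1, max(w_j − γ, 0)) ≤ K}`, is positive semi-definite with
eigenvalues in `[0,1]` and trace at most `K`, and minimizes `‖H − W‖_F` over all positive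
semi-definite `H` with `H ⪯ I` and `tr(H) ≤ K`. -/
theorem fantope_projection (d K : ℕ) (hK1 : 1 ≤ K) (hKd : K ≤ d)
    (W : Matrix (Fin d) (Fin d) ℝ) (w : Fin d → ℝ) (u : Fin d → Fin d → ℝ)
    (horth : ∀ i j, dotProduct (u i) (u j) = if i = j then (1 : ℝ) else 0)
    (hW : W = ∑ j, w j • Matrix.vecMulVec (u j) (u j))
    (γstar : ℝ)
    (hγ : γstar = sInf {γ : ℝ | 0 ≤ γ ∧ ∑ j, min 1 (max (w j - γ) 0) ≤ (K : ℝ)})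
    (Hstar : Matrix (Fin d) (Fin d) ℝ)
    (hH : Hstar = ∑ j, (min 1 (max (w j - γstar) 0)) • Matrix.vecMulVec (u j) (u j)) :
    Hstar.PosSemidef ∧ (1 - Hstar).PosSemidef ∧ Hstar.trace ≤ (K : ℝ) ∧
      ∀ H : Matrix (Fin d) (Fin d) ℝ, H.PosSemidef → (1 - H).PosSemidef →
        H.trace ≤ (K : ℝ) → frobNorm (Hstar - W) ≤ frobNorm (H - W) :=
  fantope_projection_general d K W w u horth hW γstar hγ Hstar hH
end

section
/- Let m ≥ 1 and for each i ∈ [m] let a^{(i)}_1, …, a^{(i)}_{n_i} ∈ ℝ^d be a finite sequence of vectors satisfying Σ_{k=2}^{n_i} ‖a^{(i)}_k − a^{(i)}_{k−1}‖_∞ ≤ δ, and let N = Σ_{i=1}^m n_i. Then for all coordinates j, l ∈ [d]: | (1/N) Σ_{i=1}^m Σ_{k=1}^{⌊n_i/2⌋} (a^{(i)}_{2k, j} − a^{(i)}_{2k−1, j}) (a^{(i)}_{2k, l} − a^{(i)}_{2k−1, l}) | ≤ m δ² / N. -/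
/-! The steps `2k - 1 → 2k` are disjoint steps of each sequence, so in every coordinate the
paired differences have absolute sum at most the total variation `δ`. Hence each client's sum of
cross products is at most `δ²` in absolute value, and the `m` clients contribute at most `m δ²`. -/

open BigOperators

open Finset

theorem abs_sum_mul_le_sum_abs_mul_sum_abs {ι R : Type*} [CommRing R] [LinearOrder R]
    [IsStrictOrderedRing R] (s : Finset ι) (f g : ι → R) :
    |∑ i ∈ s, f i * g i| ≤ (∑ i ∈ s, |f i|) * ∑ i ∈ s, |g i| := by
  calc |∑ i ∈ s, f i * g i| ≤ ∑ i ∈ s, |f i| * |g i| := by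
        simpa only [abs_mul] using abs_sum_le_sum_abs (fun i => f i * g i) s
    _ ≤ ∑ i ∈ s, |f i| * ∑ j ∈ s, |g j| := by
        gcongr with i hi
        exact single_le_sum (fun j _ => abs_nonneg (g j)) hi
    _ = (∑ i ∈ s, |f i|) * ∑ i ∈ s, |g i| := (sum_mul _ _ _).symm

theorem sum_norm_sub_pairs_le_variation {E : Type*} [SeminormedAddGroup E] (a : ℕ → E)
    (n : ℕ) :
    ∑ k ∈ Icc 1 (n / 2), ‖a (2 * k) - a (2 * k - 1)‖ ≤ ∑ k ∈ Icc 2 n, ‖a k - a (k - 1)‖ := by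
  have hpairs : ∑ k ∈ Icc 1 (n / 2), ‖a (2 * k) - a (2 * k - 1)‖
      = ∑ k ∈ (Icc 1 (n / 2)).image (2 * ·), ‖a k - a (k - 1)‖ := by
    rw [sum_image fun x _ y _ h => by omega]
  rw [hpairs]
  refine sum_le_sum_of_subset_of_nonneg ?_ fun k _ _ => norm_nonneg _
  intro k hk
  simp only [mem_image, mem_Icc] at hk ⊢
  omega

theorem sum_abs_coord_sub_pairs_le_variation {ι : Type*} [Fintype ι] (a : ℕ → ι → ℝ)
    (n : ℕ) (j : ι) :
    ∑ k ∈ Icc 1 (n / 2), |a (2 * k) j - a (2 * k - 1) j|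
      ≤ ∑ k ∈ Icc 2 n, ‖a k - a (k - 1)‖ :=
  (sum_le_sum fun k _ => norm_le_pi_norm (a (2 * k) - a (2 * k - 1)) j).trans
    (sum_norm_sub_pairs_le_variation a n)

theorem abs_sum_mul_coord_sub_pairs_le_variation_sq {ι : Type*} [Fintype ι]
    (a : ℕ → ι → ℝ) (n : ℕ) (j l : ι) :
    |∑ k ∈ Icc 1 (n / 2), (a (2 * k) j - a (2 * k - 1) j) * (a (2 * k) l - a (2 * k - 1) l)|
      ≤ (∑ k ∈ Icc 2 n, ‖a k - a (k - 1)‖) ^ 2 :=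
  (abs_sum_mul_le_sum_abs_mul_sum_abs _ _ _).trans <| (sq _).ge.trans' <|
    mul_le_mul (sum_abs_coord_sub_pairs_le_variation a n j)
      (sum_abs_coord_sub_pairs_le_variation a n l) (sum_nonneg fun _ _ => abs_nonneg _)
      (sum_nonneg fun _ _ => norm_nonneg _)

theorem paired_difference_bound_general (m d : ℕ) (n : Fin m → ℕ) (δ : ℝ)
    (a : Fin m → ℕ → Fin d → ℝ)
    (ha : ∀ i, ∑ k ∈ Finset.Icc 2 (n i), ‖a i k - a i (k - 1)‖ ≤ δ)
    (N : ℕ) :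
    ∀ j l : Fin d,
      |(1 / (N : ℝ)) * ∑ i, ∑ k ∈ Finset.Icc 1 (n i / 2),
          (a i (2 * k) j - a i (2 * k - 1) j) * (a i (2 * k) l - a i (2 * k - 1) l)|
        ≤ (m : ℝ) * δ ^ 2 / N := by
  intro j l
  have hclient : ∀ i, |∑ k ∈ Icc 1 (n i / 2),
      (a i (2 * k) j - a i (2 * k - 1) j) * (a i (2 * k) l - a i (2 * k - 1) l)| ≤ δ ^ 2 :=
    fun i => (abs_sum_mul_coord_sub_pairs_le_variation_sq (a i) (n i) j l).trans <|
      pow_le_pow_left₀ (sum_nonneg fun _ _ => norm_nonneg _) (ha i) 2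
  have htotal : |∑ i, ∑ k ∈ Icc 1 (n i / 2),
      (a i (2 * k) j - a i (2 * k - 1) j) * (a i (2 * k) l - a i (2 * k - 1) l)|
        ≤ m * δ ^ 2 := by
    calc _ ≤ ∑ i : Fin m, |∑ k ∈ Icc 1 (n i / 2),
          (a i (2 * k) j - a i (2 * k - 1) j) * (a i (2 * k) l - a i (2 * k - 1) l)| :=
          abs_sum_le_sum_abs _ _
      _ ≤ ∑ _i : Fin m, δ ^ 2 := sum_le_sum fun i _ => hclient i
      _ = m * δ ^ 2 := by simp
  rw [abs_mul, abs_of_nonneg (by positivity), one_div_mul_eq_div]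
  exact div_le_div_of_nonneg_right htotal (Nat.cast_nonneg N)

/-- The deterministic bound on the term `M₁` in the proof of Lemma 2: if for each client
`i` the vectors `a^{(i)}_1, …, a^{(i)}_{n_i}` have total variation (in the sup norm) at
most `δ`, then the averaged paired-difference cross products are bounded by `m δ² / N`.
Here `‖·‖` on `Fin d → ℝ` is the sup norm. -/
theorem paired_difference_bound (m d : ℕ) (hm : 1 ≤ m) (n : Fin m → ℕ) (δ : ℝ)
    (a : Fin m → ℕ → Fin d → ℝ)
    (ha : ∀ i, ∑ k ∈ Finset.Icc 2 (n i), ‖a i k - a i (k - 1)‖ ≤ δ)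
    (N : ℕ) (hN : N = ∑ i, n i) :
    ∀ j l : Fin d,
      |(1 / (N : ℝ)) * ∑ i, ∑ k ∈ Finset.Icc 1 (n i / 2),
          (a i (2 * k) j - a i (2 * k - 1) j) * (a i (2 * k) l - a i (2 * k - 1) l)|
        ≤ (m : ℝ) * δ ^ 2 / N :=
  paired_difference_bound_general m d n δ a ha N
end

section
/- Let K̂₁, …, K̂_m be independent ℕ-valued random variables on a probability space with P(K̂_i ≠ K) ≤ γ for every i ∈ [m], where K ∈ ℕ and 0 ≤ γ ≤ 1. Let K̂ be any random variable such that almost surely K̂ is a mode of the sample (K̂₁, …, K̂_m), i.e. #{i : K̂_i = K̂} ≥ #{i : K̂_i = k} for every k ∈ ℕ. Then P(K̂ ≠ K) ≤ (2 √γ)^m. -/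
/-!
If a mode of the sample differs from `K`, then at least half of the `m` estimates are
wrong, so some set of `⌈m/2⌉` estimates is entirely wrong. By independence each such set
is entirely wrong with probability at most `γ^⌈m/2⌉ ≤ √γ^m`, and there are at most `2^m`
such sets.
-/

open MeasureTheory ProbabilityTheory Finset

def IsMode {ι α : Type*} (f : ι → α) (a : α) : Prop :=
  ∀ k, Nat.card {i // f i = k} ≤ Nat.card {i // f i = a}

theorem IsMode.card_le_two_mul_card_ne {ι α : Type*} [Fintype ι] [DecidableEq α]
    {f : ι → α} {a b : α} (h : IsMode f a) (hab : a ≠ b) :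
    Fintype.card ι ≤ 2 * #{i | f i ≠ b} := by
  have hb_le_a : #{i | f i = b} ≤ #{i | f i = a} := by
    simpa only [Nat.card_eq_fintype_card, Fintype.card_subtype] using h b
  have ha_le_ne : #{i | f i = a} ≤ #{i | f i ≠ b} :=
    card_le_card fun i hi => by
      rw [mem_filter] at hi ⊢
      exact ⟨hi.1, hi.2 ▸ hab⟩
  have hsplit : #{i | f i = b} + #{i | f i ≠ b} = Fintype.card ι := by
    simpa using card_filter_add_card_filter_not (s := univ) (fun i => f i = b)
  omega

namespace ProbabilityTheory

theorem iIndepFun.measure_le_choose_mul_pow {Ω ι : Type*} [MeasurableSpace Ω] {μ : Measure Ω}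
    [Fintype ι] {β : ι → Type*} [∀ i, MeasurableSpace (β i)] {f : ∀ i, Ω → β i}
    (hf : iIndepFun f μ) {s : ∀ i, Set (β i)} [∀ i, DecidablePred (· ∈ s i)]
    (hs : ∀ i, MeasurableSet (s i))
    {p : ENNReal} (hp : ∀ i, μ (f i ⁻¹' s i) ≤ p) (t : ℕ) :
    μ {ω | t ≤ #{i | f i ω ∈ s i}} ≤ (Fintype.card ι).choose t * p ^ t := by
  have hcover : {ω | t ≤ #{i | f i ω ∈ s i}} ⊆
      ⋃ S ∈ (univ : Finset ι).powersetCard t, ⋂ i ∈ S, f i ⁻¹' s i := by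
    intro ω hω
    obtain ⟨S, hS, hScard⟩ := exists_subset_card_eq hω
    refine Set.mem_biUnion (mem_powersetCard.2 ⟨subset_univ S, hScard⟩) ?_
    exact Set.mem_biInter fun i hi => (mem_filter.1 (hS hi)).2
  have hinter : ∀ S ∈ (univ : Finset ι).powersetCard t, μ (⋂ i ∈ S, f i ⁻¹' s i) ≤ p ^ t := by
    intro S hS
    rw [hf.measure_inter_preimage_eq_mul S fun i _ => hs i, ← (mem_powersetCard.1 hS).2,
      ← prod_const]
    exact prod_le_prod' fun i _ => hp i
  calc μ {ω | t ≤ #{i | f i ω ∈ s i}}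
      ≤ ∑ S ∈ (univ : Finset ι).powersetCard t, μ (⋂ i ∈ S, f i ⁻¹' s i) :=
        (measure_mono hcover).trans (measure_biUnion_finset_le _ _)
    _ ≤ ∑ _S ∈ (univ : Finset ι).powersetCard t, p ^ t := sum_le_sum hinter
    _ = (Fintype.card ι).choose t * p ^ t := by
        rw [sum_const, card_powersetCard, card_univ, nsmul_eq_mul]

end ProbabilityTheory

theorem choose_mul_pow_le_two_mul_sqrt_pow {γ : ℝ} (hγ0 : 0 ≤ γ) (hγ1 : γ ≤ 1) {n t : ℕ}
    (hnt : n ≤ 2 * t) : (n.choose t : ℝ) * γ ^ t ≤ (2 * √γ) ^ n := by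
  have hchoose : (n.choose t : ℝ) ≤ 2 ^ n := by exact_mod_cast Nat.choose_le_two_pow n t
  have hpow : γ ^ t ≤ √γ ^ n := by
    calc γ ^ t = √γ ^ (2 * t) := by rw [pow_mul, Real.sq_sqrt hγ0]
      _ ≤ √γ ^ n := pow_le_pow_of_le_one (Real.sqrt_nonneg γ) (Real.sqrt_le_one.2 hγ1) hnt
  rw [mul_pow]
  exact mul_le_mul hchoose hpow (by positivity) (by positivity)

theorem mode_of_independent_estimates_bound_general {Ω : Type*} [MeasurableSpace Ω]
    (μ : Measure Ω) [IsProbabilityMeasure μ] (m : ℕ)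
    (Khat : Fin m → Ω → ℕ)
    (hindep : iIndepFun Khat μ)
    (K : ℕ) (γ : ℝ) (hγ0 : 0 ≤ γ) (hγ1 : γ ≤ 1)
    (herr : ∀ i, μ {ω | Khat i ω ≠ K} ≤ ENNReal.ofReal γ)
    (Kmode : Ω → ℕ)
    (hmode : ∀ᵐ ω ∂μ, ∀ k : ℕ,
      Nat.card {i : Fin m // Khat i ω = k} ≤
        Nat.card {i : Fin m // Khat i ω = Kmode ω}) :
    μ {ω | Kmode ω ≠ K} ≤ ENNReal.ofReal ((2 * Real.sqrt γ) ^ m) := by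
  set t := (m + 1) / 2
  have hmajority : {ω | Kmode ω ≠ K} ≤ᵐ[μ] {ω | t ≤ #{i | Khat i ω ∈ ({K}ᶜ : Set ℕ)}} := by
    filter_upwards [hmode] with ω hω hne
    have hhalf := IsMode.card_le_two_mul_card_ne hω hne
    rw [Fintype.card_fin] at hhalf
    change t ≤ #{i | Khat i ω ≠ K}
    omega
  calc μ {ω | Kmode ω ≠ K}
      ≤ m.choose t * ENNReal.ofReal γ ^ t := by
        simpa using (measure_mono_ae hmajority).trans
          (hindep.measure_le_choose_mul_pow (fun _ => (measurableSet_singleton K).compl)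
            herr t)
    _ = ENNReal.ofReal (m.choose t * γ ^ t) := by
        rw [ENNReal.ofReal_mul (by positivity), ENNReal.ofReal_pow hγ0, ENNReal.ofReal_natCast]
    _ ≤ ENNReal.ofReal ((2 * Real.sqrt γ) ^ m) :=
        ENNReal.ofReal_le_ofReal (choose_mul_pow_le_two_mul_sqrt_pow hγ0 hγ1 (by omega))

/-- Corollary 1 (abstract form): if `K̂₁, …, K̂_m` are independent ℕ-valued estimates,
each wrong with probability at most `γ`, and `K̂` is almost surely a mode of the sample
`(K̂₁, …, K̂_m)`, then `P(K̂ ≠ K) ≤ (2√γ)^m`. -/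
theorem mode_of_independent_estimates_bound {Ω : Type*} [MeasurableSpace Ω]
    (μ : Measure Ω) [IsProbabilityMeasure μ] (m : ℕ) (hm : 1 ≤ m)
    (Khat : Fin m → Ω → ℕ) (hmeas : ∀ i, Measurable (Khat i))
    (hindep : iIndepFun Khat μ)
    (K : ℕ) (γ : ℝ) (hγ0 : 0 ≤ γ) (hγ1 : γ ≤ 1)
    (herr : ∀ i, μ {ω | Khat i ω ≠ K} ≤ ENNReal.ofReal γ)
    (Kmode : Ω → ℕ)
    (hmode : ∀ᵐ ω ∂μ, ∀ k : ℕ,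
      Nat.card {i : Fin m // Khat i ω = k} ≤
        Nat.card {i : Fin m // Khat i ω = Kmode ω}) :
    μ {ω | Kmode ω ≠ K} ≤ ENNReal.ofReal ((2 * Real.sqrt γ) ^ m) :=
  mode_of_independent_estimates_bound_general μ m Khat hindep K γ hγ0 hγ1 herr Kmode hmode
end
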